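/- Let h > 0, α ∈ (0,1), j ≥ 1 an integer, t_k = kh, and L_0(t) = f_0 (t² − 3ht + 2h²)/(2h²) − f_1 (t² − 2ht)/h² + f_2 (t² − ht)/(2h²). Then ∫_{t_0}^{t_1} L_0'(τ) (t_j − τ)^{−α} dτ = h^{−α} [ (f_2 − 2f_1 + f_0)/((1−α)(2−α)) · (j^{2−α} − (j−1)^{2−α}) − (f_2 − 4f_1 + 3f_0)/(2−2α) · j^{1−α} − (f_2 − f_0)/(2(1−α)) · (j−1)^{1−α} ]. -/

import Mathlib

/-!
`L0'` is the affine function `A τ + B`. Writing it as `(A c + B) - A (c - τ)` with `c = t_j`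
turns the integral into two integrals of powers of `c - τ`, which have closed forms for exponents
above `-1`. Since `t_j = j h` and `t_j - h = (j - 1) h`, every power splits off a power of `h`,
leaving a rational identity in `j^(-α)`, `(j - 1)^(-α)` and `h^(-α)`.
-/

open Real

theorem Real.rpow_add_one_of_add_one_ne_zero {y : ℝ} (hy : y + 1 ≠ 0) (x : ℝ) :
    x ^ (y + 1) = x ^ y * x := by
  rcases eq_or_ne x 0 with rfl | hx
  · rw [zero_rpow hy, mul_zero]
  · exact rpow_add_one hx y

theorem integral_sub_rpow {p : ℝ} (hp : -1 < p) (a b c : ℝ) :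
    ∫ τ in a..b, (c - τ) ^ p = ((c - a) ^ (p + 1) - (c - b) ^ (p + 1)) / (p + 1) := by
  rw [intervalIntegral.integral_comp_sub_left (fun x => x ^ p), integral_rpow (Or.inl hp)]

theorem intervalIntegrable_sub_rpow {p : ℝ} (hp : -1 < p) (a b c : ℝ) :
    IntervalIntegrable (fun τ => (c - τ) ^ p) MeasureTheory.volume a b := by
  simpa using (intervalIntegral.intervalIntegrable_rpow' hp (a := c - a) (b := c - b)).comp_sub_left c

theorem integral_linear_mul_sub_rpow_neg {α : ℝ} (hα : α < 1) (A B a b c : ℝ) :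
    ∫ τ in a..b, (A * τ + B) * (c - τ) ^ (-α) =
      (A * c + B) * (((c - a) ^ (1 - α) - (c - b) ^ (1 - α)) / (1 - α))
        - A * (((c - a) ^ (2 - α) - (c - b) ^ (2 - α)) / (2 - α)) := by
  have hsplit : ∀ τ, (A * τ + B) * (c - τ) ^ (-α) =
      (A * c + B) * (c - τ) ^ (-α) - A * (c - τ) ^ (-α + 1) := fun τ => by
    rw [rpow_add_one_of_add_one_ne_zero (by linarith)]
    ring
  have hp₀ : -1 < -α := by linarith
  have hp₁ : -1 < -α + 1 := by linarith
  simp_rw [hsplit]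
  rw [intervalIntegral.integral_sub ((intervalIntegrable_sub_rpow hp₀ a b c).const_mul _)
      ((intervalIntegrable_sub_rpow hp₁ a b c).const_mul _),
    intervalIntegral.integral_const_mul, intervalIntegral.integral_const_mul,
    integral_sub_rpow hp₀, integral_sub_rpow hp₁]
  ring_nf

theorem integral_L0_deriv (α h f0 f1 f2 : ℝ) (hα : α ∈ Set.Ioo (0:ℝ) 1) (hh : 0 < h)
    (j : ℕ) (hj : 1 ≤ j) :
    let L0 : ℝ → ℝ := fun t =>
      f0 * (t ^ 2 - 3 * h * t + 2 * h ^ 2) / (2 * h ^ 2)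
        - f1 * (t ^ 2 - 2 * h * t) / h ^ 2
        + f2 * (t ^ 2 - h * t) / (2 * h ^ 2)
    (∫ τ in (0:ℝ)..h, deriv L0 τ * ((j : ℝ) * h - τ) ^ (-α)) =
      h ^ (-α) *
        ((f2 - 2 * f1 + f0) / ((1 - α) * (2 - α)) *
            ((j : ℝ) ^ (2 - α) - ((j : ℝ) - 1) ^ (2 - α))
          - (f2 - 4 * f1 + 3 * f0) / (2 - 2 * α) * (j : ℝ) ^ (1 - α)
          - (f2 - f0) / (2 * (1 - α)) * ((j : ℝ) - 1) ^ (1 - α)) := by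
  intro L0
  have hα₁ : α < 1 := hα.2
  have hp₁ : -α + 1 ≠ 0 := by linarith
  have hp₂ : -α + 1 + 1 ≠ 0 := by linarith
  have h1α : 1 - α ≠ 0 := by linarith
  have hj₀ : (0 : ℝ) ≤ j := Nat.cast_nonneg j
  have hj₁ : (0 : ℝ) ≤ j - 1 := sub_nonneg.mpr (by exact_mod_cast hj)
  set A := (f0 - 2 * f1 + f2) / h ^ 2 with hA
  set B := (4 * f1 - 3 * f0 - f2) / (2 * h) with hB
  have hL0 : L0 = fun t => A / 2 * t ^ 2 + B * t + f0 := by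
    funext t
    simp only [L0, hA, hB]
    field_simp
    ring
  have hderiv : ∀ τ, deriv L0 τ = A * τ + B := fun τ => by
    rw [hL0]
    exact ((((hasDerivAt_pow 2 τ).const_mul (A / 2)).add ((hasDerivAt_id τ).const_mul B)).add_const
      f0).deriv.trans (by ring)
  simp_rw [hderiv]
  rw [integral_linear_mul_sub_rpow_neg hα₁, sub_zero, show (j : ℝ) * h - h = (j - 1) * h by ring,
    mul_rpow hj₀ hh.le, mul_rpow hj₁ hh.le, mul_rpow hj₀ hh.le, mul_rpow hj₁ hh.le,
    show (2 : ℝ) - α = -α + 1 + 1 by ring, show (1 : ℝ) - α = -α + 1 by ring]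
  simp only [rpow_add_one_of_add_one_ne_zero hp₁, rpow_add_one_of_add_one_ne_zero hp₂]
  generalize (j : ℝ) ^ (-α) = U
  generalize ((j : ℝ) - 1) ^ (-α) = W
  generalize h ^ (-α) = H
  rw [hA, hB]
  field_simp
  ring
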